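/- Let b_1 ≤ b_2 ≤ ... ≤ b_n be a non-decreasing sequence of non-negative integers, and set e_i = (i-1) - b_i and a_i = i-1 for all 1 ≤ i ≤ n. Then for all 0 ≤ k ≤ m ≤ n, the (m,k) entry of M_{e→a} equals R_{m-k}(B_m), the number of placements of m-k non-attacking rooks on the Ferrers board B_m with m columns in which column i contains b_i cells. -/

import Mathlib

open Polynomial Finset

/-- `IsCOB n a e M` says that `M` is the change-of-basis matrix `M_{e→a}`:
for each `0 ≤ m ≤ n`, the entry `M m k` is the coefficient of `∏_{i=1}^k (x - a_i)`
in the expansion of `∏_{i=1}^m (x - e_i)` in the basis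
`1, (x-a₁), …, ∏_{i=1}^n (x-a_i)`.  (Sequences are 0-indexed: `a i` is `a_{i+1}`.)
Since that basis expansion is unique, this characterizes `M_{e→a}` uniquely. -/
def IsCOB (n : ℕ) (a e : ℕ → ℝ) (M : Matrix (Fin (n+1)) (Fin (n+1)) ℝ) : Prop :=
  ∀ m : Fin (n+1),
    (∏ i ∈ Finset.range (m : ℕ), (X - C (e i))) =
      ∑ k : Fin (n+1), C (M m k) * ∏ i ∈ Finset.range (k : ℕ), (X - C (a i))

/-- `rookCount b m r`: the number of placements of `r` non-attacking rooks on the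
Ferrers board with `m` columns whose `i`-th column (1-indexed) has `b (i-1)` cells,
i.e. the number of `r`-element sets of cells `(i,j)` with `1 ≤ i ≤ m`,
`1 ≤ j ≤ b_i`, no two sharing a column or a row. -/
noncomputable def rookCount (b : ℕ → ℕ) (m r : ℕ) : ℕ :=
  Nat.card {P : Finset (ℕ × ℕ) //
    P.card = r ∧
    (∀ c ∈ P, 1 ≤ c.1 ∧ c.1 ≤ m ∧ 1 ≤ c.2 ∧ c.2 ≤ b (c.1 - 1)) ∧
    (∀ c ∈ P, ∀ c' ∈ P, c ≠ c' → c.1 ≠ c'.1 ∧ c.2 ≠ c'.2)}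

/-!
Sort the placements of `r + 1` rooks on `B_{m+1}` by whether the new column `m + 1` holds a rook.
Since `b` is non-decreasing, the `r` rows used by a placement on `B_m` all lie in the new column,
which leaves `b_{m+1} - r` free cells there; hence
`R_{r+1}(B_{m+1}) = R_{r+1}(B_m) + (b_{m+1} - r) R_r(B_m)`.
With `a_i = i - 1` the basis polynomials are the falling factorials `x(x-1)⋯(x-k+1)`, and for
`k + r = m` we have `x - e_{m+1} = (x - k) + (b_{m+1} - r)`, so the coefficients of
`∏ (x - e_i)` in that basis satisfy the same recurrence. The expansion is unique because the
basis polynomials have distinct degrees.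
-/

section RookPlacements

variable (b : ℕ → ℕ)

def ferrersBoard (m : ℕ) : Finset (ℕ × ℕ) :=
  {c ∈ Icc 1 m ×ˢ Icc 1 ((range m).sup b) | c.2 ≤ b (c.1 - 1)}

def IsNonAttacking (P : Finset (ℕ × ℕ)) : Prop :=
  Set.InjOn Prod.fst (P : Set (ℕ × ℕ)) ∧ Set.InjOn Prod.snd (P : Set (ℕ × ℕ))

open Classical in
noncomputable def rookPlacements (m r : ℕ) : Finset (Finset (ℕ × ℕ)) :=
  {P ∈ (ferrersBoard b m).powersetCard r | IsNonAttacking P}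

variable {b} {m r : ℕ} {P Q : Finset (ℕ × ℕ)}

lemma mem_ferrersBoard {c : ℕ × ℕ} :
    c ∈ ferrersBoard b m ↔ 1 ≤ c.1 ∧ c.1 ≤ m ∧ 1 ≤ c.2 ∧ c.2 ≤ b (c.1 - 1) := by
  simp only [ferrersBoard, mem_filter, mem_product, mem_Icc]
  refine ⟨fun ⟨⟨⟨h₁, h₂⟩, h₃, _⟩, h₄⟩ => ⟨h₁, h₂, h₃, h₄⟩,
    fun ⟨h₁, h₂, h₃, h₄⟩ => ⟨⟨⟨h₁, h₂⟩, h₃, h₄.trans (le_sup (mem_range.2 (by omega)))⟩, h₄⟩⟩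

lemma mem_ferrersBoard_iff_mem_succ {c : ℕ × ℕ} :
    c ∈ ferrersBoard b m ↔ c ∈ ferrersBoard b (m + 1) ∧ c.1 ≠ m + 1 := by
  simp only [mem_ferrersBoard]
  omega

lemma mk_succ_mem_ferrersBoard_succ {j : ℕ} (hj : j ∈ Icc 1 (b m)) :
    (m + 1, j) ∈ ferrersBoard b (m + 1) := by
  simpa [mem_ferrersBoard] using hj

lemma isNonAttacking_iff :
    IsNonAttacking P ↔ ∀ c ∈ P, ∀ c' ∈ P, c ≠ c' → c.1 ≠ c'.1 ∧ c.2 ≠ c'.2 :=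
  ⟨fun h _ hc _ hc' hne => ⟨fun h₁ => hne (h.1 hc hc' h₁), fun h₂ => hne (h.2 hc hc' h₂)⟩,
    fun h => ⟨fun _ hc _ hc' h₁ => by_contra fun hne => (h _ hc _ hc' hne).1 h₁,
      fun _ hc _ hc' h₂ => by_contra fun hne => (h _ hc _ hc' hne).2 h₂⟩⟩

lemma IsNonAttacking.mono (h : IsNonAttacking Q) (hPQ : P ⊆ Q) : IsNonAttacking P :=
  ⟨h.1.mono (coe_subset.2 hPQ), h.2.mono (coe_subset.2 hPQ)⟩

lemma mem_rookPlacements :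
    P ∈ rookPlacements b m r ↔ P ⊆ ferrersBoard b m ∧ #P = r ∧ IsNonAttacking P := by
  simp [rookPlacements, mem_powersetCard, and_assoc]

variable (b m r) in
lemma rookCount_eq_card_rookPlacements :
    rookCount b m r = #(rookPlacements b m r) := by
  rw [rookCount, ← Nat.card_eq_finsetCard]
  refine Nat.card_congr (Equiv.subtypeEquivRight fun P => ?_)
  rw [mem_rookPlacements, isNonAttacking_iff]
  simp only [mem_ferrersBoard, subset_iff]
  tauto

variable (b m) in
lemma rookCount_zero_right : rookCount b m 0 = 1 := by
  rw [rookCount_eq_card_rookPlacements, card_eq_one]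
  refine ⟨∅, eq_singleton_iff_unique_mem.2 ⟨?_, fun P hP => ?_⟩⟩
  · simp [mem_rookPlacements, IsNonAttacking]
  · exact card_eq_zero.1 (mem_rookPlacements.1 hP).2.1

variable (b) in
lemma rookCount_eq_zero_of_lt (h : m < r) : rookCount b m r = 0 := by
  rw [rookCount_eq_card_rookPlacements, card_eq_zero, eq_empty_iff_forall_notMem]
  intro P hP
  obtain ⟨hPB, rfl, hPna⟩ := mem_rookPlacements.1 hP
  have hcols : P.image Prod.fst ⊆ Icc 1 m := fun i hi => by
    obtain ⟨c, hc, rfl⟩ := mem_image.1 hi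
    have := mem_ferrersBoard.1 (hPB hc)
    exact mem_Icc.2 ⟨this.1, this.2.1⟩
  have := card_le_card hcols
  rw [card_image_of_injOn hPna.1, Nat.card_Icc] at this
  omega

lemma fst_ne_succ_of_mem_rookPlacements (hP : P ∈ rookPlacements b m r) {c : ℕ × ℕ}
    (hc : c ∈ P) : c.1 ≠ m + 1 :=
  (mem_ferrersBoard_iff_mem_succ.1 ((mem_rookPlacements.1 hP).1 hc)).2

lemma eq_and_eq_of_insert_eq_insert {P₁ P₂ : Finset (ℕ × ℕ)} {j₁ j₂ : ℕ}
    (hP₁ : ∀ c ∈ P₁, c.1 ≠ m + 1) (hP₂ : ∀ c ∈ P₂, c.1 ≠ m + 1)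
    (h : insert (m + 1, j₁) P₁ = insert (m + 1, j₂) P₂) : P₁ = P₂ ∧ j₁ = j₂ := by
  obtain rfl : j₁ = j₂ := by
    rcases mem_insert.1 (h ▸ mem_insert_self (m + 1, j₁) P₁) with h' | h'
    · exact (Prod.ext_iff.1 h').2
    · exact absurd rfl (hP₂ _ h')
  refine ⟨?_, rfl⟩
  rw [← erase_insert fun h' => hP₁ (m + 1, j₁) h' rfl, h,
    erase_insert fun h' => hP₂ (m + 1, j₁) h' rfl]

lemma insert_mem_rookPlacements_succ (hP : P ∈ rookPlacements b m r) {j : ℕ}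
    (hj : j ∈ Icc 1 (b m) \ P.image Prod.snd) :
    insert (m + 1, j) P ∈ rookPlacements b (m + 1) (r + 1) := by
  obtain ⟨hPB, rfl, hPna⟩ := mem_rookPlacements.1 hP
  obtain ⟨hjB, hjP⟩ := mem_sdiff.1 hj
  have hnew : (m + 1, j) ∉ P := fun h => fst_ne_succ_of_mem_rookPlacements hP h rfl
  refine mem_rookPlacements.2 ⟨insert_subset (mk_succ_mem_ferrersBoard_succ hjB)
    fun c hc => (mem_ferrersBoard_iff_mem_succ.1 (hPB hc)).1, card_insert_of_notMem hnew, ?_⟩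
  rw [IsNonAttacking, coe_insert, Set.injOn_insert (mod_cast hnew),
    Set.injOn_insert (mod_cast hnew)]
  refine ⟨⟨hPna.1, ?_⟩, hPna.2, ?_⟩
  · rintro ⟨c, hc, hc₁⟩
    exact fst_ne_succ_of_mem_rookPlacements hP hc hc₁
  · rwa [← coe_image, mem_coe]

lemma erase_mem_rookPlacements (hQ : Q ∈ rookPlacements b (m + 1) (r + 1)) {c : ℕ × ℕ}
    (hc : c ∈ Q) (hc₁ : c.1 = m + 1) :
    Q.erase c ∈ rookPlacements b m r ∧ c.2 ∈ Icc 1 (b m) \ (Q.erase c).image Prod.snd := by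
  obtain ⟨hQB, hQr, hQna⟩ := mem_rookPlacements.1 hQ
  refine ⟨mem_rookPlacements.2 ⟨fun c' hc' => ?_, by rw [card_erase_of_mem hc, hQr]; rfl,
    hQna.mono (erase_subset c Q)⟩, mem_sdiff.2 ⟨?_, ?_⟩⟩
  · obtain ⟨hne, hc'Q⟩ := mem_erase.1 hc'
    exact mem_ferrersBoard_iff_mem_succ.2 ⟨hQB hc'Q, hc₁ ▸ fun h => hne (hQna.1 hc'Q hc h)⟩
  · have := mem_ferrersBoard.1 (hQB hc)
    rw [hc₁] at this
    exact mem_Icc.2 ⟨this.2.2.1, this.2.2.2⟩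
  · rintro h
    obtain ⟨c', hc', h₂⟩ := mem_image.1 h
    obtain ⟨hne, hc'Q⟩ := mem_erase.1 hc'
    exact hne (hQna.2 hc'Q hc h₂)

variable (b m r) in
lemma filter_rookPlacements_succ_not_last_column :
    {Q ∈ rookPlacements b (m + 1) r | ¬∃ c ∈ Q, c.1 = m + 1} = rookPlacements b m r := by
  ext Q
  simp only [mem_filter, mem_rookPlacements, not_exists, not_and]
  constructor
  · rintro ⟨⟨hQB, hQr, hQna⟩, hlast⟩
    exact ⟨fun c hc => mem_ferrersBoard_iff_mem_succ.2 ⟨hQB hc, hlast c hc⟩, hQr, hQna⟩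
  · rintro ⟨hQB, hQr, hQna⟩
    exact ⟨⟨fun c hc => (mem_ferrersBoard_iff_mem_succ.1 (hQB hc)).1, hQr, hQna⟩,
      fun c hc => (mem_ferrersBoard_iff_mem_succ.1 (hQB hc)).2⟩

variable (b m r) in
lemma card_filter_rookPlacements_succ_last_column :
    #{Q ∈ rookPlacements b (m + 1) (r + 1) | ∃ c ∈ Q, c.1 = m + 1} =
      ∑ P ∈ rookPlacements b m r, #(Icc 1 (b m) \ P.image Prod.snd) := by
  rw [← card_sigma]
  symm
  refine card_bij (fun x _ => insert (m + 1, x.2) x.1) (fun x hx => ?_) ?_ fun Q hQ => ?_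
  · obtain ⟨hP, hj⟩ := mem_sigma.1 hx
    exact mem_filter.2 ⟨insert_mem_rookPlacements_succ hP hj, _, mem_insert_self _ _, rfl⟩
  · rintro ⟨P₁, j₁⟩ hx ⟨P₂, j₂⟩ hy hxy
    obtain ⟨rfl, rfl⟩ := eq_and_eq_of_insert_eq_insert
      (fun _ => fst_ne_succ_of_mem_rookPlacements (mem_sigma.1 hx).1)
      (fun _ => fst_ne_succ_of_mem_rookPlacements (mem_sigma.1 hy).1) hxy
    rfl
  · obtain ⟨hQ, c, hc, hc₁⟩ := mem_filter.1 hQ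
    obtain ⟨hP, hj⟩ := erase_mem_rookPlacements hQ hc hc₁
    exact ⟨⟨Q.erase c, c.2⟩, mem_sigma.2 ⟨hP, hj⟩, by rw [← hc₁, insert_erase hc]⟩

lemma card_Icc_sdiff_image_snd_add (hb : ∀ i < m, b i ≤ b m) (hP : P ∈ rookPlacements b m r) :
    #(Icc 1 (b m) \ P.image Prod.snd) + r = b m := by
  obtain ⟨hPB, rfl, hPna⟩ := mem_rookPlacements.1 hP
  have hrows : P.image Prod.snd ⊆ Icc 1 (b m) := fun j hj => by
    obtain ⟨c, hc, rfl⟩ := mem_image.1 hj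
    obtain ⟨h₁, h₂, h₃, h₄⟩ := mem_ferrersBoard.1 (hPB hc)
    exact mem_Icc.2 ⟨h₃, h₄.trans (hb _ (by omega))⟩
  rw [← card_image_of_injOn hPna.2, card_sdiff_add_card_eq_card hrows, Nat.card_Icc,
    Nat.add_sub_cancel]

theorem rookCount_succ_succ (hb : ∀ i < m, b i ≤ b m) :
    rookCount b (m + 1) (r + 1) + r * rookCount b m r =
      rookCount b m (r + 1) + b m * rookCount b m r := by
  simp only [rookCount_eq_card_rookPlacements]
  rw [← card_filter_add_card_filter_not (p := fun Q => ∃ c ∈ Q, c.1 = m + 1),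
    card_filter_rookPlacements_succ_last_column, filter_rookPlacements_succ_not_last_column]
  suffices ∑ P ∈ rookPlacements b m r, #(Icc 1 (b m) \ P.image Prod.snd) +
      r * #(rookPlacements b m r) = b m * #(rookPlacements b m r) by omega
  calc _
      = ∑ P ∈ rookPlacements b m r, (#(Icc 1 (b m) \ P.image Prod.snd) + r) := by
        rw [sum_add_distrib, sum_const, smul_eq_mul, mul_comm]
    _ = ∑ P ∈ rookPlacements b m r, b m :=
        sum_congr rfl fun _ hP => card_Icc_sdiff_image_snd_add hb hP
    _ = b m * #(rookPlacements b m r) := by rw [sum_const, smul_eq_mul, mul_comm]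

end RookPlacements

lemma descPochhammer_eq_prod_range (R : Type*) [CommRing R] (n : ℕ) :
    descPochhammer R n = ∏ i ∈ range n, (X - C (i : R)) := by
  induction n with
  | zero => simp
  | succ n ih => rw [descPochhammer_succ_right, ih, prod_range_succ, map_natCast]

theorem prod_X_sub_eq_sum_rookCount_mul_descPochhammer (R : Type*) [CommRing R]
    {b : ℕ → ℕ} {m : ℕ} (hb : MonotoneOn b (Set.Iio m)) :
    ∏ i ∈ range m, (X - C ((i : R) - b i)) =
      ∑ p ∈ antidiagonal m, C (rookCount b m p.1 : R) * descPochhammer R p.2 := by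
  induction m with
  | zero => simp [rookCount_zero_right]
  | succ m ih =>
    have hrec (r : ℕ) : (rookCount b (m + 1) (r + 1) : R) =
        rookCount b m (r + 1) + (b m - r) * rookCount b m r := by
      have := congrArg (Nat.cast : ℕ → R) <| rookCount_succ_succ (r := r) fun i hi =>
        hb (Set.mem_Iio.2 (hi.trans m.lt_succ_self)) (Set.mem_Iio.2 m.lt_succ_self) hi.le
      push_cast at this
      linear_combination this
    have hstep : ∀ p ∈ antidiagonal m,
        C (rookCount b m p.1 : R) * descPochhammer R p.2 * (X - C ((m : R) - b m)) =
          C (rookCount b m p.1 : R) * descPochhammer R (p.2 + 1) +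
            C ((b m - p.1) * rookCount b m p.1 : R) * descPochhammer R p.2 := by
      intro p hp
      rw [← mem_antidiagonal.1 hp, descPochhammer_succ_right]
      simp only [map_mul, map_sub, map_add, map_natCast, Nat.cast_add]
      ring
    have hshift :
        ∑ p ∈ antidiagonal m, C (rookCount b m p.1 : R) * descPochhammer R (p.2 + 1) =
        C (rookCount b m 0 : R) * descPochhammer R (m + 1) +
          ∑ p ∈ antidiagonal m, C (rookCount b m (p.1 + 1) : R) * descPochhammer R p.2 := by
      calc _ = ∑ p ∈ antidiagonal (m + 1), C (rookCount b m p.1 : R) * descPochhammer R p.2 := by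
            rw [Finset.Nat.sum_antidiagonal_succ', rookCount_eq_zero_of_lt b m.lt_succ_self]
            simp
        _ = _ := Finset.Nat.sum_antidiagonal_succ
    rw [prod_range_succ, ih (hb.mono (Set.Iio_subset_Iio m.le_succ)), sum_mul,
      sum_congr rfl hstep, sum_add_distrib, hshift, Finset.Nat.sum_antidiagonal_succ,
      rookCount_zero_right, rookCount_zero_right, add_assoc, ← sum_add_distrib]
    congr 1
    refine sum_congr rfl fun p _ => ?_
    rw [hrec, map_add, add_mul]

lemma Finset.Nat.sum_antidiagonal_eq_sum_fin_ite {M : Type*} [AddCommMonoid M]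
    (f : ℕ → ℕ → M) {m n : ℕ} (hm : m ≤ n) :
    ∑ p ∈ antidiagonal m, f p.1 p.2 =
      ∑ k : Fin (n + 1), if (k : ℕ) ≤ m then f (m - k) k else 0 := by
  rw [Fin.sum_univ_eq_sum_range (fun k => if k ≤ m then f (m - k) k else 0), ← sum_filter,
    ← Finset.Nat.sum_antidiagonal_swap]
  simp only [Prod.fst_swap, Prod.snd_swap]
  rw [Finset.Nat.sum_antidiagonal_eq_sum_range_succ (fun i k => f k i)]
  congr 1
  ext k
  simp only [mem_range, mem_filter]
  omega

lemma Polynomial.Sequence.eq_of_sum_fin_C_mul_eq {R : Type*} [CommRing R] [IsDomain R]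
    (S : Polynomial.Sequence R) {N : ℕ} {f g : Fin N → R}
    (h : ∑ k, C (f k) * S k = ∑ k, C (g k) * S k) : f = g :=
  _root_.funext <| Fintype.linearIndependent_iffₛ.1
    (S.linearIndependent.comp _ Fin.val_injective) f g <| by
    simpa only [Function.comp_apply, smul_eq_C_mul] using h

noncomputable def descPochhammerSequence (R : Type*) [CommRing R] [IsDomain R] :
    Polynomial.Sequence R where
  elems' := descPochhammer R
  degree_eq' n := by
    rw [degree_eq_natDegree (monic_descPochhammer R n).ne_zero, descPochhammer_natDegree]

theorem statement14 (n : ℕ) (b : ℕ → ℕ)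
    (hb : ∀ i j, i ≤ j → j < n → b i ≤ b j)
    (M : Matrix (Fin (n+1)) (Fin (n+1)) ℝ)
    (hM : IsCOB n (fun i => (i : ℝ)) (fun i => (i : ℝ) - (b i : ℝ)) M)
    (m k : ℕ) (hk : k ≤ m) (hm : m ≤ n) :
    M ⟨m, by omega⟩ ⟨k, by omega⟩ = (rookCount b m (m - k) : ℝ) := by
  have hrook := prod_X_sub_eq_sum_rookCount_mul_descPochhammer ℝ (b := b) (m := m)
    fun i _ j hj hij => hb i j hij (lt_of_lt_of_le hj hm)
  rw [Finset.Nat.sum_antidiagonal_eq_sum_fin_ite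
    (fun i j => C (rookCount b m i : ℝ) * descPochhammer ℝ j) hm] at hrook
  have hcob := hM ⟨m, by omega⟩
  simp only [← descPochhammer_eq_prod_range] at hcob
  have hcoeff := (descPochhammerSequence ℝ).eq_of_sum_fin_C_mul_eq (f := M ⟨m, by omega⟩)
    (g := fun j => if (j : ℕ) ≤ m then (rookCount b m (m - j) : ℝ) else 0) <| by
    change ∑ j : Fin (n + 1), _ * descPochhammer ℝ j =
      ∑ j : Fin (n + 1), _ * descPochhammer ℝ j
    rw [← hcob, hrook]
    refine sum_congr rfl fun j _ => ?_
    split_ifs <;> simp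
  simpa [hk] using congrFun hcoeff ⟨k, by omega⟩
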